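/- arXiv:2105.12354 — 5 statements merged into one kernel-verified Lean document; each statement's English description precedes it below -/
import Mathlib

section
/- Let p ≥ 2 and let d be a nonnegative integer with d < p/2. Then the number N(p,n,d) of vectors x ∈ (Z/pZ)^n with Lee weight w_L(x) ≤ d equals Σ_{i=0}^{n} 2^i · C(n,i) · C(d,i). -/
/-- Lee weight of an element of `ZMod p`. -/
def leeWt (p : ℕ) (x : ZMod p) : ℕ := min x.val (p - x.val)

/-- Lee weight of a vector in `(ZMod p)^n`: sum of coordinate Lee weights. -/
def leeWtV (p n : ℕ) (x : Fin n → ZMod p) : ℕ := ∑ i, leeWt p (x i)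

open Finset

lemma sum_range_choose_eq (d i : ℕ) : ∑ j ∈ range d, j.choose i = d.choose (i+1) := by
  induction d with
  | zero => simp
  | succ d ih => rw [sum_range_succ, ih, Nat.choose_succ_succ, Nat.add_comm]

def gD (n d : ℕ) : ℕ := ∑ i ∈ range (n+1), 2^i * n.choose i * d.choose i

lemma gD_zero (d : ℕ) : gD 0 d = 1 := by simp [gD]

lemma gD_succ (n d : ℕ) : gD (n+1) d = gD n d + 2 * ∑ j ∈ range d, gD n j := by
  have h2 : 2 * ∑ j ∈ range d, gD n j
      = ∑ i ∈ range (n+1), (fun i => match i with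
          | 0 => 0 | (j+1) => 2^(j+1) * n.choose j * d.choose (j+1)) (i+1) := by
    simp only [gD]
    rw [Finset.sum_comm, Finset.mul_sum]
    refine Finset.sum_congr rfl fun i _ => ?_
    rw [← Finset.mul_sum, sum_range_choose_eq]
    ring
  rw [h2]
  have key : ∀ i, 2^i * (n+1).choose i * d.choose i
      = 2^i * n.choose i * d.choose i
        + (fun i => match i with
          | 0 => 0 | (j+1) => 2^(j+1) * n.choose j * d.choose (j+1)) i := by
    intro i
    cases i with
    | zero => simp
    | succ j => simp only [Nat.choose_succ_succ]; ring
  calc gD (n+1) d = ∑ i ∈ range (n+2), 2^i * (n+1).choose i * d.choose i := rfl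
    _ = ∑ i ∈ range (n+2), (2^i * n.choose i * d.choose i
        + (fun i => match i with
          | 0 => 0 | (j+1) => 2^(j+1) * n.choose j * d.choose (j+1)) i) := by
        exact Finset.sum_congr rfl fun i _ => key i
    _ = (∑ i ∈ range (n+2), 2^i * n.choose i * d.choose i)
        + ∑ i ∈ range (n+2), (fun i => match i with
          | 0 => 0 | (j+1) => 2^(j+1) * n.choose j * d.choose (j+1)) i := by
        rw [Finset.sum_add_distrib]
    _ = gD n d + ∑ i ∈ range (n+1), (fun i => match i with
          | 0 => 0 | (j+1) => 2^(j+1) * n.choose j * d.choose (j+1)) (i+1) := by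
        congr 1
        · rw [Finset.sum_range_succ]; simp [gD]
        · rw [Finset.sum_range_succ']; simp

-- fiber lemma
lemma fiber_card (p j : ℕ) (hp : 2 ≤ p) (hj2 : 2 * j < p) [NeZero p] :
    (univ.filter (fun a : ZMod p => leeWt p a = j)).card = if j = 0 then 1 else 2 := by
  have hjp : j < p := by omega
  have hset : (univ.filter (fun a : ZMod p => leeWt p a = j))
      = {(j : ZMod p), ((p - j : ℕ) : ZMod p)} := by
    ext a
    simp only [mem_filter, mem_univ, true_and, mem_insert, mem_singleton]
    constructor
    · intro h
      have hv : a.val < p := ZMod.val_lt a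
      have : a.val = j ∨ a.val = p - j := by
        unfold leeWt at h
        rcases le_total a.val (p - a.val) with h' | h'
        · left; omega
        · right; omega
      have ha : ((a.val : ℕ) : ZMod p) = a := ZMod.natCast_zmod_val a
      rcases this with h1 | h1
      · left; rw [← ha, h1]
      · right; rw [← ha, h1]
    · rintro (rfl | rfl)
      · unfold leeWt
        rw [ZMod.val_cast_of_lt hjp]
        omega
      · unfold leeWt
        rcases Nat.eq_zero_or_pos j with rfl | hj
        · simp
        · rw [ZMod.val_cast_of_lt (by omega : p - j < p)]
          omega
  rw [hset]
  rcases Nat.eq_zero_or_pos j with rfl | hj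
  · simp
  · rw [if_neg (by omega)]
    rw [Finset.card_insert_of_notMem, Finset.card_singleton]
    simp only [mem_singleton]
    intro h
    have h1 : ((j : ℕ) : ZMod p).val = j := ZMod.val_cast_of_lt hjp
    have h2 : ((p - j : ℕ) : ZMod p).val = p - j := ZMod.val_cast_of_lt (by omega)
    rw [h] at h1
    omega

def splitEquiv (p n d : ℕ) :
    {x : Fin (n+1) → ZMod p // leeWtV p (n+1) x ≤ d} ≃
    Σ a : ZMod p, {y : Fin n → ZMod p // leeWt p a + leeWtV p n y ≤ d} where
  toFun x := ⟨x.1 0, fun i => x.1 i.succ, by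
    have := x.2
    rwa [leeWtV, Fin.sum_univ_succ] at this⟩
  invFun s := ⟨Fin.cons s.1 s.2.1, by
    rw [leeWtV, Fin.sum_univ_succ]
    simpa [leeWtV] using s.2.2⟩
  left_inv x := by
    apply Subtype.ext
    funext i
    induction i using Fin.cases <;> simp
  right_inv s := by
    rcases s with ⟨a, y, h⟩
    simp only [Fin.cons_zero, Fin.cons_succ]
    rfl

lemma card_succ (p n d : ℕ) (hp : 2 ≤ p) (hd : 2 * d < p) [NeZero p] :
    Fintype.card {x : Fin (n+1) → ZMod p // leeWtV p (n+1) x ≤ d}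
    = ∑ a : ZMod p, (if leeWt p a ≤ d then
        Fintype.card {y : Fin n → ZMod p // leeWtV p n y ≤ d - leeWt p a} else 0) := by
  rw [Fintype.card_congr (splitEquiv p n d), Fintype.card_sigma]
  refine Finset.sum_congr rfl fun a _ => ?_
  by_cases h : leeWt p a ≤ d
  · rw [if_pos h]
    exact Fintype.card_congr (Equiv.subtypeEquivRight (fun y => by omega))
  · rw [if_neg h]
    have : IsEmpty {y : Fin n → ZMod p // leeWt p a + leeWtV p n y ≤ d} :=
      ⟨fun y => by have := y.2; omega⟩
    exact Fintype.card_eq_zero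

lemma regroup (p d : ℕ) (hp : 2 ≤ p) (hd : 2 * d < p) [NeZero p] (F : ℕ → ℕ) :
    ∑ a : ZMod p, (if leeWt p a ≤ d then F (d - leeWt p a) else 0)
    = F d + 2 * ∑ j ∈ range d, F j := by
  have h1 : ∑ a : ZMod p, (if leeWt p a ≤ d then F (d - leeWt p a) else 0)
      = ∑ a ∈ univ.filter (fun a : ZMod p => leeWt p a ≤ d), F (d - leeWt p a) := by
    rw [Finset.sum_filter]
  rw [h1]
  have h2 : ∑ a ∈ univ.filter (fun a : ZMod p => leeWt p a ≤ d), F (d - leeWt p a)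
      = ∑ j ∈ range (d+1), ∑ a ∈ (univ.filter (fun a : ZMod p => leeWt p a ≤ d)).filter
          (fun a => leeWt p a = j), F (d - leeWt p a) := by
    rw [Finset.sum_fiberwise_of_maps_to]
    intro a ha
    simp only [mem_filter, mem_univ, true_and] at ha
    simp [Nat.lt_succ_iff, ha]
  rw [h2]
  have h3 : ∀ j ∈ range (d+1), (∑ a ∈ (univ.filter (fun a : ZMod p => leeWt p a ≤ d)).filter
          (fun a => leeWt p a = j), F (d - leeWt p a)) = (if j = 0 then 1 else 2) * F (d - j) := by
    intro j hj
    rw [mem_range, Nat.lt_succ_iff] at hj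
    have hfil : (univ.filter (fun a : ZMod p => leeWt p a ≤ d)).filter (fun a => leeWt p a = j)
        = univ.filter (fun a : ZMod p => leeWt p a = j) := by
      rw [Finset.filter_filter]
      apply Finset.filter_congr
      intro a _
      constructor
      · rintro ⟨_, h⟩; exact h
      · intro h; exact ⟨by omega, h⟩
    rw [hfil]
    rw [Finset.sum_congr rfl (fun a ha => by
      simp only [mem_filter] at ha
      rw [ha.2])]
    rw [Finset.sum_const, fiber_card p j hp (by omega), smul_eq_mul]
  rw [Finset.sum_congr rfl h3]
  rw [Finset.sum_range_succ' (fun j => (if j = 0 then 1 else 2) * F (d - j)) d]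
  have ht : ∑ j ∈ range d, (if j + 1 = 0 then 1 else 2) * F (d - (j+1))
      = 2 * ∑ j ∈ range d, F j := by
    rw [Finset.mul_sum, ← Finset.sum_range_reflect]
    apply Finset.sum_congr rfl
    intro j hj
    rw [mem_range] at hj
    simp only [Nat.succ_ne_zero, if_false]
    have hx : d - (d - 1 - j + 1) = j := by omega
    rw [hx]
  rw [ht]
  simp [add_comm]

lemma card_main (p : ℕ) (hp : 2 ≤ p) [NeZero p] :
    ∀ n d, 2 * d < p → Fintype.card {x : Fin n → ZMod p // leeWtV p n x ≤ d} = gD n d := by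
  intro n
  induction n with
  | zero =>
    intro d _
    rw [gD_zero]
    rw [Fintype.card_congr (Equiv.subtypeUnivEquiv (fun x => by simp [leeWtV]))]
    simp
  | succ n ih =>
    intro d hd
    rw [card_succ p n d hp hd]
    have : ∀ a : ZMod p, (if leeWt p a ≤ d then
        Fintype.card {y : Fin n → ZMod p // leeWtV p n y ≤ d - leeWt p a} else 0)
        = (if leeWt p a ≤ d then gD n (d - leeWt p a) else 0) := by
      intro a
      by_cases h : leeWt p a ≤ d
      · rw [if_pos h, if_pos h, ih (d - leeWt p a) (by omega)]
      · rw [if_neg h, if_neg h]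
    rw [Finset.sum_congr rfl (fun a _ => this a)]
    rw [regroup p d hp hd (gD n), gD_succ]

/-- If `d < p/2`, the number `N(p,n,d)` of vectors of Lee weight at most `d`
equals `∑_{i=0}^n 2^i C(n,i) C(d,i)`. -/
theorem stmt5 (p n d : ℕ) (hp : 2 ≤ p) (hd : 2 * d < p) :
    Nat.card {x : Fin n → ZMod p // leeWtV p n x ≤ d} =
      ∑ i ∈ Finset.range (n + 1), 2 ^ i * n.choose i * d.choose i := by
  haveI : NeZero p := ⟨by omega⟩
  rw [Nat.card_eq_fintype_card, card_main p hp n d hd]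
  rfl
end

section
/- For any integers p ≥ 2, n ≥ 1, and d ≥ 1, the number N(p,n,d) of vectors x ∈ (Z/pZ)^n with Lee weight w_L(x) ≤ d satisfies N(p,n,d) ≤ C(2n + d - 1, d) + C(2n + d - 2, d - 1). -/
open Finset

lemma exists_add_eq_leeWt_and_sub_eq {p : ℕ} [NeZero p] (x : ZMod p) :
    ∃ a b : ℕ, a + b = leeWt p x ∧ (a : ZMod p) - b = x := by
  rcases le_total x.val (p - x.val) with h | h
  · exact ⟨x.val, 0, by simp [leeWt, h], by simp⟩
  · refine ⟨0, p - x.val, by simp [leeWt, h], ?_⟩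
    rw [Nat.cast_sub x.val_lt.le]
    simp

lemma exists_sum_eq_and_sub_eq_of_leeWtV_le {p n m : ℕ} [NeZero p] (i₀ : Fin n)
    (x : Fin n → ZMod p) (hx : leeWtV p n x ≤ m) (hm : Even (m - leeWtV p n x)) :
    ∃ b : Fin n ⊕ Fin n → ℕ, ∑ j, b j = m ∧
      ∀ i, (b (.inl i) : ZMod p) - b (.inr i) = x i := by
  choose a b hab hx' using fun i => exists_add_eq_leeWt_and_sub_eq (x i)
  obtain ⟨q, hq⟩ := hm
  refine ⟨Sum.elim (a + Pi.single i₀ q) (b + Pi.single i₀ q), ?_, fun i => ?_⟩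
  · have hw : ∑ i, (a i + b i) = leeWtV p n x := sum_congr rfl fun i _ => hab i
    rw [sum_add_distrib] at hw
    simp only [Fintype.sum_sum_type, Sum.elim_inl, Sum.elim_inr, Pi.add_apply, sum_add_distrib,
      Fintype.sum_pi_single']
    omega
  · simp only [Sum.elim_inl, Sum.elim_inr, Pi.add_apply, Nat.cast_add, ← hx' i]
    ring

instance (α : Type*) [Fintype α] [DecidableEq α] (m : ℕ) :
    Finite {b : α → ℕ // ∑ j, b j = m} :=
  .of_equiv _ (Sym.equivNatSumOfFintype α m)

lemma natCard_subtype_sum_eq_eq_choose (α : Type*) [Fintype α] [DecidableEq α] (m : ℕ) :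
    Nat.card {b : α → ℕ // ∑ j, b j = m} = (Fintype.card α + m - 1).choose m := by
  rw [← Nat.card_congr (Sym.equivNatSumOfFintype α m), Sym.natCard_sym_eq_choose,
    Nat.card_eq_fintype_card]

lemma natCard_leeWtV_le_le_natCard_sum {p n d : ℕ} [NeZero p] (i₀ : Fin n) :
    Nat.card {x : Fin n → ZMod p // leeWtV p n x ≤ d} ≤
      Nat.card ({b : Fin n ⊕ Fin n → ℕ // ∑ j, b j = d} ⊕
        {b : Fin n ⊕ Fin n → ℕ // ∑ j, b j = d - 1}) := by
  let diff : (Fin n ⊕ Fin n → ℕ) → Fin n → ZMod p := fun b i => b (.inl i) - b (.inr i)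
  have hpre : ∀ x : {x : Fin n → ZMod p // leeWtV p n x ≤ d}, ∃ c,
      Sum.elim (fun b : {b // ∑ j, b j = d} => diff b.1)
        (fun b : {b // ∑ j, b j = d - 1} => diff b.1) c = x.1 := by
    rintro ⟨x, hx⟩
    rcases Nat.even_or_odd (d - leeWtV p n x) with hpar | ⟨k, hk⟩
    · obtain ⟨b, hb, hdiff⟩ := exists_sum_eq_and_sub_eq_of_leeWtV_le i₀ x hx hpar
      exact ⟨.inl ⟨b, hb⟩, funext hdiff⟩
    · obtain ⟨b, hb, hdiff⟩ := exists_sum_eq_and_sub_eq_of_leeWtV_le (m := d - 1) i₀ x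
        (by omega) ⟨k, by omega⟩
      exact ⟨.inr ⟨b, hb⟩, funext hdiff⟩
  choose g hg using hpre
  exact Nat.card_le_card_of_injective g fun x y hxy => Subtype.ext <| by rw [← hg x, ← hg y, hxy]

theorem stmt6 (p n d : ℕ) (hp : 2 ≤ p) (hn : 1 ≤ n) (hd : 1 ≤ d) :
    Nat.card {x : Fin n → ZMod p // leeWtV p n x ≤ d} ≤
      (2 * n + d - 1).choose d + (2 * n + d - 2).choose (d - 1) := by
  have : NeZero p := ⟨by omega⟩
  calc _ ≤ _ := natCard_leeWtV_le_le_natCard_sum ⟨0, hn⟩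
    _ = _ := by
      rw [Nat.card_sum, natCard_subtype_sum_eq_eq_choose, natCard_subtype_sum_eq_eq_choose,
        Fintype.card_sum, Fintype.card_fin, ← two_mul]
      congr 2
      omega
end

section
/- The number of vectors in (Z/pZ)^n whose Lee weight lies in the set {d, d-2, d-4, ...} (i.e., Lee weight ≤ d with the same parity as d) is at most the number of multisets of size d from a set of size 2n, namely C(2n + d - 1, d). -/
lemma leeWtV_eq_sum_natAbs_valMinAbs {p n : ℕ} [NeZero p] (x : Fin n → ZMod p) :
    leeWtV p n x = ∑ i, (x i).valMinAbs.natAbs := by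
  simp only [leeWtV, leeWt, ZMod.valMinAbs_natAbs_eq_min]

section SignedMultiset

variable {ι : Type*}

def signedCount [DecidableEq ι] (m : Multiset (ι × Bool)) (i : ι) : ℤ :=
  m.count (i, true) - m.count (i, false)

lemma signedCount_add [DecidableEq ι] (m m' : Multiset (ι × Bool)) :
    signedCount (m + m') = signedCount m + signedCount m' := by
  ext i
  simp only [signedCount, Multiset.count_add, Pi.add_apply]
  push_cast
  ring

lemma signedCount_balanced [DecidableEq ι] (k : ℕ) (i₀ : ι) :
    signedCount (k • {(i₀, true)} + k • {(i₀, false)}) = 0 := by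
  ext i
  simp [signedCount, Multiset.count_singleton]

variable [Fintype ι]

def signedUnits (v : ι → ℤ) : Multiset (ι × Bool) :=
  ∑ i, ((v i).toNat • {(i, true)} + (-v i).toNat • {(i, false)})

lemma signedCount_signedUnits [DecidableEq ι] (v : ι → ℤ) :
    signedCount (signedUnits v) = v := by
  ext i
  simp [signedCount, signedUnits, Multiset.count_sum', Multiset.count_singleton]

lemma card_signedUnits (v : ι → ℤ) :
    Multiset.card (signedUnits v) = ∑ i, (v i).natAbs := by
  simp [signedUnits]

def paddedSignedUnits (d : ℕ) (i₀ : ι) (v : ι → ℤ) : Multiset (ι × Bool) :=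
  let k := (d - ∑ i, (v i).natAbs) / 2
  signedUnits v + (k • {(i₀, true)} + k • {(i₀, false)})

lemma signedCount_paddedSignedUnits [DecidableEq ι] (d : ℕ) (i₀ : ι) (v : ι → ℤ) :
    signedCount (paddedSignedUnits d i₀ v) = v := by
  rw [paddedSignedUnits, signedCount_add, signedCount_signedUnits, signedCount_balanced,
    add_zero]

lemma card_paddedSignedUnits {d : ℕ} (i₀ : ι) {v : ι → ℤ}
    (hle : ∑ i, (v i).natAbs ≤ d) (hpar : (∑ i, (v i).natAbs) % 2 = d % 2) :
    Multiset.card (paddedSignedUnits d i₀ v) = d := by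
  simp only [paddedSignedUnits, Multiset.card_add, Multiset.card_nsmul, Multiset.card_singleton,
    card_signedUnits]
  omega

theorem natCard_le_choose_of_injective_intVec [Nonempty ι] {α : Type*} {d : ℕ}
    (g : α → ι → ℤ) (hg : Function.Injective g)
    (hgd : ∀ a, ∑ i, (g a i).natAbs ≤ d ∧ (∑ i, (g a i).natAbs) % 2 = d % 2) :
    Nat.card α ≤ (2 * Fintype.card ι + d - 1).choose d := by
  classical
  let i₀ : ι := Classical.arbitrary ι
  let f : α → Sym (ι × Bool) d := fun a =>
    ⟨paddedSignedUnits d i₀ (g a), card_paddedSignedUnits i₀ (hgd a).1 (hgd a).2⟩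
  have hf : Function.Injective f := fun a b hab => hg <| by
    rw [← signedCount_paddedSignedUnits d i₀ (g a),
      ← signedCount_paddedSignedUnits d i₀ (g b)]
    exact congrArg (signedCount ∘ Sym.toMultiset) hab
  calc Nat.card α ≤ Nat.card (Sym (ι × Bool) d) := Nat.card_le_card_of_injective f hf
    _ = (2 * Fintype.card ι + d - 1).choose d := by
      rw [Sym.natCard_sym_eq_choose, Nat.card_eq_fintype_card, Fintype.card_prod,
        Fintype.card_bool, mul_comm]

end SignedMultiset

theorem stmt8_general (p n d : ℕ) (hp : 2 ≤ p) (hn : 1 ≤ n) :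
    Nat.card {x : Fin n → ZMod p //
        leeWtV p n x ≤ d ∧ leeWtV p n x % 2 = d % 2} ≤
      (2 * n + d - 1).choose d := by
  have : NeZero p := ⟨by omega⟩
  have : Nonempty (Fin n) := ⟨⟨0, hn⟩⟩
  have hinj : Function.Injective fun (x : {x : Fin n → ZMod p //
      leeWtV p n x ≤ d ∧ leeWtV p n x % 2 = d % 2}) i => (x.1 i).valMinAbs :=
    fun x y hxy => Subtype.ext <| funext fun i => ZMod.valMinAbs_inj.mp (congrFun hxy i)
  simpa using natCard_le_choose_of_injective_intVec _ hinj fun x => by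
    simpa only [leeWtV_eq_sum_natAbs_valMinAbs] using x.2

/-- The number of vectors of Lee weight `≤ d` with the same parity as `d`
is at most the number of size-`d` multisets from a `2n`-set. -/
theorem stmt8 (p n d : ℕ) (hp : 2 ≤ p) (hn : 1 ≤ n) (hd : 1 ≤ d) :
    Nat.card {x : Fin n → ZMod p //
        leeWtV p n x ≤ d ∧ leeWtV p n x % 2 = d % 2} ≤
      (2 * n + d - 1).choose d :=
  stmt8_general p n d hp hn
end

section
/- For integers n ≥ 1, d ≥ 1, the number of vectors in (Z/pZ)^n of Lee weight at most d is at most exp_2((2n + d) · h_2(d/(2n+d))), where h_2 is the binary entropy function. In particular, if d = δn for fixed δ > 0, then (1/n) log_p N(p, n, δn) ≤ (2 + δ) h_p(δ/(2 + δ)), where h_p(y) = -y log_p y - (1-y) log_p(1-y). -/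
/-- `N(p,n,d)`: the number of vectors in `(ZMod p)^n` of Lee weight at most `d`. -/
noncomputable def NLee (p n d : ℕ) : ℕ :=
  Nat.card {x : Fin n → ZMod p // leeWtV p n x ≤ d}

/-- `b`-ary entropy function (with value `0` at `y = 0, 1`). -/
noncomputable def bEnt (b y : ℝ) : ℝ :=
  -(y * Real.logb b y) - (1 - y) * Real.logb b (1 - y)

/-!
Writing each coordinate of a vector as `+r` or `-r` with `r` its Lee weight, a vector of Lee weight
at most `d` is determined by the `2n` numbers `r` placed in the slot of their sign; these are
`2n` naturals of sum at most `d`, and there are `C(2n + d, d)` of them (a slack variable makes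
the sum exactly `d`, i.e. a multiset of size `d` on `2n + 1` letters). Evaluating the binomial
expansion of `(y + (1 - y))^m` at `y = k / m` keeps only the term `C(m, k) y^k (1 - y)^(m - k)`,
which gives `log C(m, k) ≤ m H(k / m)`.
-/

open Real

def sumLeEquivSumEqOption (α : Type*) [Fintype α] (d : ℕ) :
    {P : α → ℕ // ∑ a, P a ≤ d} ≃ {Q : Option α → ℕ // ∑ o, Q o = d} where
  toFun P := ⟨fun o => o.elim (d - ∑ a, P.1 a) P.1, by
    rw [Fintype.sum_option]; have := P.2; simp only [Option.elim]; omega⟩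
  invFun Q := ⟨fun a => Q.1 (some a), by
    show ∑ a, Q.1 (some a) ≤ d
    have := Q.2; rw [Fintype.sum_option] at this; omega⟩
  left_inv _ := rfl
  right_inv Q := by
    have := Q.2
    rw [Fintype.sum_option] at this
    ext (_ | a)
    · show d - ∑ a, Q.1 (some a) = Q.1 none
      omega
    · rfl

noncomputable def sumLeEquivSym (α : Type*) [Fintype α] [DecidableEq α] (d : ℕ) :
    {P : α → ℕ // ∑ a, P a ≤ d} ≃ Sym (Option α) d :=
  (sumLeEquivSumEqOption α d).trans (Sym.equivNatSumOfFintype (Option α) d).symm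

instance (α : Type*) [Fintype α] (d : ℕ) : Finite {P : α → ℕ // ∑ a, P a ≤ d} := by
  classical
  exact Finite.of_equiv _ (sumLeEquivSym α d).symm

theorem card_fun_sum_le_eq_choose (α : Type*) [Fintype α] (d : ℕ) :
    Nat.card {P : α → ℕ // ∑ a, P a ≤ d} = (Fintype.card α + d).choose d := by
  classical
  rw [Nat.card_congr (sumLeEquivSym α d), Nat.card_eq_fintype_card, Sym.card_sym_eq_choose,
    Fintype.card_option, Nat.add_right_comm, Nat.add_sub_cancel]

section LeeParts

variable {p : ℕ}

def leeParts (p : ℕ) (z : ZMod p) : Bool → ℕ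
  | false => if 2 * z.val ≤ p then z.val else 0
  | true => if 2 * z.val ≤ p then 0 else p - z.val

theorem leeParts_true_add_false (z : ZMod p) :
    leeParts p z true + leeParts p z false = leeWt p z := by
  simp only [leeParts, leeWt]
  split_ifs <;> omega

theorem leeParts_injective [NeZero p] : Function.Injective (leeParts p) := by
  intro z w h
  have hz := z.val_lt
  have hw := w.val_lt
  have h₀ := congrFun h false
  have h₁ := congrFun h true
  simp only [leeParts] at h₀ h₁
  apply ZMod.val_injective
  split_ifs at h₀ h₁ <;> omega

def leeProfile (p n : ℕ) (x : Fin n → ZMod p) : Fin n × Bool → ℕ :=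
  fun ib => leeParts p (x ib.1) ib.2

theorem sum_leeProfile {n : ℕ} (x : Fin n → ZMod p) :
    ∑ ib, leeProfile p n x ib = leeWtV p n x := by
  simp only [leeProfile, Fintype.sum_prod_type, Fintype.sum_bool, leeParts_true_add_false, leeWtV]

theorem leeProfile_injective [NeZero p] {n : ℕ} : Function.Injective (leeProfile p n) :=
  fun _ _ h => funext fun i => leeParts_injective (funext fun b => congrFun h (i, b))

end LeeParts

theorem NLee_le_choose (p n d : ℕ) [NeZero p] : NLee p n d ≤ (2 * n + d).choose d := by
  have h := Nat.card_le_card_of_injective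
    (fun x : {x // leeWtV p n x ≤ d} =>
      (⟨leeProfile p n x, (sum_leeProfile x.1).trans_le x.2⟩ :
        {P : Fin n × Bool → ℕ // ∑ ib, P ib ≤ d}))
    (fun _ _ h => Subtype.ext (leeProfile_injective (congrArg Subtype.val h)))
  rwa [card_fun_sum_le_eq_choose, Fintype.card_prod, Fintype.card_fin, Fintype.card_bool,
    mul_comm] at h

theorem NLee_pos (p n d : ℕ) [NeZero p] : 0 < NLee p n d :=
  have : Nonempty {x : Fin n → ZMod p // leeWtV p n x ≤ d} := ⟨⟨0, by simp [leeWtV, leeWt]⟩⟩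
  Nat.card_pos

theorem choose_mul_pow_mul_pow_le_one (m k : ℕ) {y : ℝ} (hy₀ : 0 ≤ y) (hy₁ : y ≤ 1) :
    (m.choose k : ℝ) * (y ^ k * (1 - y) ^ (m - k)) ≤ 1 := by
  rcases lt_or_ge m k with hmk | hkm
  · simp [Nat.choose_eq_zero_of_lt hmk]
  calc (m.choose k : ℝ) * (y ^ k * (1 - y) ^ (m - k))
      = y ^ k * (1 - y) ^ (m - k) * m.choose k := by ring
    _ ≤ ∑ i ∈ Finset.range (m + 1), y ^ i * (1 - y) ^ (m - i) * m.choose i :=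
        Finset.single_le_sum (f := fun i => y ^ i * (1 - y) ^ (m - i) * (m.choose i : ℝ))
          (fun i _ => by positivity) (Finset.mem_range.mpr (by omega))
    _ = 1 := by rw [← add_pow, add_sub_cancel, one_pow]

theorem log_choose_le_mul_binEntropy {m k : ℕ} (hkm : k ≤ m) :
    log (m.choose k) ≤ m * binEntropy (k / m) := by
  rcases Nat.eq_zero_or_pos k with rfl | hk
  · simp
  rcases hkm.eq_or_lt with rfl | hkm
  · rw [div_self (Nat.cast_ne_zero.mpr hk.ne' : (k : ℝ) ≠ 0), binEntropy_one]
    simp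
  have hm : (0 : ℝ) < m := by exact_mod_cast hk.trans hkm
  set y : ℝ := k / m with hy
  have hy₀ : 0 < y := by positivity
  have hy₁ : y < 1 := by rw [hy, div_lt_one hm]; exact_mod_cast hkm
  have hweight : log (y ^ k * (1 - y) ^ (m - k)) = -(m * binEntropy y) := by
    rw [log_mul (by positivity) (pow_pos (by linarith) _).ne', log_pow, log_pow,
      Nat.cast_sub hkm.le, binEntropy_eq_negMulLog_add_negMulLog_one_sub, negMulLog, negMulLog, hy]
    field_simp
    ring
  have hpos : 0 < y ^ k * (1 - y) ^ (m - k) := mul_pos (pow_pos hy₀ _) (pow_pos (by linarith) _)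
  have key := choose_mul_pow_mul_pow_le_one m k hy₀.le hy₁.le
  calc log (m.choose k) ≤ log (y ^ k * (1 - y) ^ (m - k))⁻¹ := by
        gcongr
        · exact_mod_cast Nat.choose_pos hkm.le
        · rwa [← one_div, le_div_iff₀ hpos]
    _ = m * binEntropy y := by rw [log_inv, hweight, neg_neg]

theorem log_NLee_le (p n d : ℕ) [NeZero p] :
    log (NLee p n d) ≤ (2 * n + d : ℝ) * binEntropy (d / (2 * n + d)) := by
  calc log (NLee p n d) ≤ log ((2 * n + d).choose d) := by
        gcongr
        · exact_mod_cast NLee_pos p n d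
        · exact_mod_cast NLee_le_choose p n d
    _ ≤ _ := by
        have := log_choose_le_mul_binEntropy (Nat.le_add_left d (2 * n))
        push_cast at this
        exact this

theorem bEnt_eq_binEntropy_div_log (b y : ℝ) : bEnt b y = binEntropy y / log b := by
  simp only [bEnt, logb, binEntropy_eq_negMulLog_add_negMulLog_one_sub, negMulLog]
  ring

theorem stmt15_general (p n d : ℕ) (hp : 2 ≤ p) (hn : 1 ≤ n) :
    (NLee p n d : ℝ) ≤ 2 ^ ((2 * n + d : ℝ) * bEnt 2 ((d : ℝ) / (2 * n + d))) ∧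
    ∀ δ : ℝ, 0 < δ → (d : ℝ) = δ * n →
      (1 / (n : ℝ)) * Real.logb p (NLee p n d) ≤
        (2 + δ) * bEnt p (δ / (2 + δ)) := by
  have : NeZero p := ⟨by omega⟩
  have hlog := log_NLee_le p n d
  have hN : (0 : ℝ) < NLee p n d := by exact_mod_cast NLee_pos p n d
  refine ⟨?_, fun δ _ hdn => ?_⟩
  · rw [rpow_def_of_pos two_pos, bEnt_eq_binEntropy_div_log, ← exp_log hN]
    have hlog2 : log 2 ≠ 0 := by positivity
    calc exp (log (NLee p n d)) ≤ exp ((2 * n + d : ℝ) * binEntropy (d / (2 * n + d))) := by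
          gcongr
      _ = _ := by congr 1; field_simp
  · have hn' : (0 : ℝ) < n := by exact_mod_cast hn
    have hlogp : 0 < log p := log_pos (by exact_mod_cast hp)
    have hm : (2 * n + d : ℝ) = (2 + δ) * n := by rw [hdn]; ring
    have hy : (d : ℝ) / (2 * n + d) = δ / (2 + δ) := by
      rw [hm, hdn]
      field_simp
    rw [hy, hm] at hlog
    rw [logb, bEnt_eq_binEntropy_div_log]
    calc 1 / (n : ℝ) * (log (NLee p n d) / log p)
        ≤ 1 / n * ((2 + δ) * n * binEntropy (δ / (2 + δ)) / log p) := by gcongr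
      _ = (2 + δ) * (binEntropy (δ / (2 + δ)) / log p) := by field_simp

theorem stmt15 (p n d : ℕ) (hp : 2 ≤ p) (hn : 1 ≤ n) (hd : 1 ≤ d) :
    (NLee p n d : ℝ) ≤ 2 ^ ((2 * n + d : ℝ) * bEnt 2 ((d : ℝ) / (2 * n + d))) ∧
    ∀ δ : ℝ, 0 < δ → (d : ℝ) = δ * n →
      (1 / (n : ℝ)) * Real.logb p (NLee p n d) ≤
        (2 + δ) * bEnt p (δ / (2 + δ)) :=
  stmt15_general p n d hp hn
end

section
/- Let p be an odd prime, n with p ∤ 2n, α a primitive 2n-th root of unity over F_p, and t ≥ 1. If g(x) is a divisor of x^n + 1 in F_p[x] with g(α) = g(α^3) = ··· = g(α^{2t-1}) = 0, then the negacyclic code of length n generated by g(x) has minimum Lee weight at least min(p, 2t+1). -/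
open Polynomial

/-- The polynomial `∑ vᵢ Xⁱ` of degree `< n` associated to a vector. -/
noncomputable def vecPoly (p n : ℕ) (v : Fin n → ZMod p) : (ZMod p)[X] :=
  ∑ i : Fin n, C (v i) * X ^ (i : ℕ)

/-- The negacyclic code of length `n` with generator polynomial `g`. -/
noncomputable def negacyclicCode (p n : ℕ) (g : (ZMod p)[X]) :
    Submodule (ZMod p) (Fin n → ZMod p) where
  carrier := {v | g ∣ vecPoly p n v}
  add_mem' := by
    intro a b ha hb
    have h : vecPoly p n (a + b) = vecPoly p n a + vecPoly p n b := by
      simp [vecPoly, Finset.sum_add_distrib, add_mul]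
    simpa [Set.mem_setOf_eq, h] using dvd_add ha hb
  zero_mem' := by simp [vecPoly]
  smul_mem' := by
    intro c v hv
    have h : vecPoly p n (c • v) = C c * vecPoly p n v := by
      simp [vecPoly, Finset.mul_sum, mul_assoc]
    simpa [Set.mem_setOf_eq, h] using Dvd.dvd.mul_left hv (C c)

/-! Write each coordinate of a nonzero codeword as `vᵢ = εᵢ wᵢ` with `εᵢ = ±1` and `wᵢ` its Lee
weight, and consider the elements `γ = εᵢ αⁱ` of the algebraic closure, `γ` counted `wᵢ` times.
Since `g` vanishes at `α^(2k+1)` for `k < t`, the odd power sums `∑ γ^(2k+1)`, `k < t`, vanish.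
Then the Wronskian of `∏ (1 - γX)` and `∏ (1 + γX)` is divisible by `X^(2t)`; if the Lee weight
`w` were `< min p (2t+1)`, this would force these two polynomials of degree `≤ w < p` to coincide,
so the `γ`'s would be closed under negation. But `εᵢ αⁱ = -εⱼ αʲ` is impossible for `i, j < n`:
squaring gives `α^(2i) = α^(2j)`, hence `i = j`, and then `2 εᵢ αⁱ = 0`. -/

namespace Polynomial

variable {K ι : Type*}

theorem natDegree_prod_one_add_C_mul_X_le [CommSemiring K] (s : Finset ι) (γ : ι → K) :
    (∏ l ∈ s, (1 + C (γ l) * X)).natDegree ≤ s.card := by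
  rw [Finset.card_eq_sum_ones]
  exact (natDegree_prod_le _ _).trans (Finset.sum_le_sum fun l _ => by compute_degree)

section CommRing

variable [CommRing K] [DecidableEq ι] (s : Finset ι) (γ : ι → K)

theorem wronskian_prod_one_sub_prod_one_add :
    wronskian (∏ l ∈ s, (1 - C (γ l) * X)) (∏ l ∈ s, (1 + C (γ l) * X)) =
      2 * ∑ l ∈ s, C (γ l) * ∏ k ∈ s.erase l, (1 - C (γ k) ^ 2 * X ^ 2) := by
  rw [wronskian, derivative_prod_finset, derivative_prod_finset, Finset.mul_sum, Finset.sum_mul,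
    ← Finset.sum_sub_distrib, Finset.mul_sum]
  refine Finset.sum_congr rfl fun l hl => ?_
  have hsq : ∏ k ∈ s.erase l, (1 - C (γ k) ^ 2 * X ^ 2) =
      (∏ k ∈ s.erase l, (1 - C (γ k) * X)) * ∏ k ∈ s.erase l, (1 + C (γ k) * X) := by
    rw [← Finset.prod_mul_distrib]
    exact Finset.prod_congr rfl fun k _ => by ring
  rw [← Finset.mul_prod_erase s (fun k => 1 - C (γ k) * X) hl,
    ← Finset.mul_prod_erase s (fun k => 1 + C (γ k) * X) hl, hsq]
  simp only [derivative_sub, derivative_add, derivative_one, derivative_C_mul_X]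
  ring

theorem X_pow_dvd_wronskian_prod_one_sub_prod_one_add (t : ℕ)
    (hγ : ∀ i < t, ∑ l ∈ s, γ l ^ (2 * i + 1) = 0) :
    X ^ (2 * t) ∣ wronskian (∏ l ∈ s, (1 - C (γ l) * X)) (∏ l ∈ s, (1 + C (γ l) * X)) := by
  rw [wronskian_prod_one_sub_prod_one_add]
  refine Dvd.dvd.mul_left ?_ _
  set R := ∏ k ∈ s, (1 - C (γ k) ^ 2 * X ^ 2)
  -- `G l` inverts `1 - γ_l² X²` modulo `X^(2t)`
  set G : ι → K[X] := fun l => ∑ i ∈ Finset.range t, (C (γ l) ^ 2 * X ^ 2) ^ i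
  have hterm : ∀ l ∈ s, X ^ (2 * t) ∣
      C (γ l) * ∏ k ∈ s.erase l, (1 - C (γ k) ^ 2 * X ^ 2) - R * (C (γ l) * G l) := by
    intro l hl
    refine ⟨C (γ l) ^ (2 * t + 1) * ∏ k ∈ s.erase l, (1 - C (γ k) ^ 2 * X ^ 2), ?_⟩
    have hgeom := mul_neg_geom_sum (C (γ l) ^ 2 * X ^ 2) t
    have hR : R = (1 - C (γ l) ^ 2 * X ^ 2) * ∏ k ∈ s.erase l, (1 - C (γ k) ^ 2 * X ^ 2) :=
      (Finset.mul_prod_erase s _ hl).symm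
    rw [hR]
    simp only [G]
    linear_combination -(C (γ l) * ∏ k ∈ s.erase l, (1 - C (γ k) ^ 2 * X ^ 2)) * hgeom
  have hsum : ∑ l ∈ s, C (γ l) * G l = 0 := by
    calc ∑ l ∈ s, C (γ l) * G l
        = ∑ i ∈ Finset.range t, C (∑ l ∈ s, γ l ^ (2 * i + 1)) * X ^ (2 * i) := by
          simp only [G, Finset.mul_sum, map_sum, Finset.sum_mul]
          rw [Finset.sum_comm]
          refine Finset.sum_congr rfl fun i _ => Finset.sum_congr rfl fun l _ => ?_
          simp only [map_pow]
          ring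
      _ = 0 := Finset.sum_eq_zero fun i hi => by
          rw [hγ i (Finset.mem_range.mp hi), map_zero, zero_mul]
  simpa only [Finset.sum_sub_distrib, ← Finset.mul_sum, hsum, mul_zero, sub_zero]
    using Finset.dvd_sum hterm

theorem eq_of_X_pow_dvd_wronskian [IsDomain K] {P Q : K[X]} {m : ℕ}
    (hP : P.natDegree ≤ m) (hQ : Q.natDegree ≤ m) (h0 : P.coeff 0 = Q.coeff 0)
    (hQ0 : Q.coeff 0 ≠ 0) (hchar : ∀ k, 0 < k → k ≤ m → (k : K) ≠ 0)
    (hW : X ^ m ∣ wronskian P Q) : P = Q := by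
  by_contra hne
  set E := P - Q
  have hE0 : E ≠ 0 := sub_ne_zero.mpr hne
  obtain ⟨j, hj⟩ : ∃ j, E.natTrailingDegree = j + 1 :=
    Nat.exists_eq_add_one.mpr <| Nat.pos_of_ne_zero fun h =>
      (natTrailingDegree_eq_zero.mp h).elim hE0 (by simp [E, h0])
  have hjm : j + 1 ≤ m := hj ▸ (natTrailingDegree_le_natDegree E).trans
    ((natDegree_sub_le P Q).trans (max_le hP hQ))
  obtain ⟨R, hR⟩ : X ^ (j + 1) ∣ E :=
    X_pow_dvd_iff.mpr fun d hd => coeff_eq_zero_of_lt_natTrailingDegree (hj ▸ hd)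
  have hR0 : R.coeff 0 ≠ 0 := by
    have : E.coeff (j + 1) = R.coeff 0 := by simp [hR, coeff_X_pow_mul']
    rw [← this, ← hj]
    exact mt trailingCoeff_eq_zero.mp hE0
  -- `wronskian P Q = wronskian E Q = X^j * F` with `F(0) = -(j+1) R(0) Q(0) ≠ 0`
  set F := X * (R * derivative Q - derivative R * Q) - C ((j + 1 : ℕ) : K) * R * Q
  have hWF : wronskian P Q = X ^ j * F := by
    have hPEQ : P = E + Q := by ring
    rw [hPEQ, wronskian_add_left, wronskian_self_eq_zero, add_zero, hR, wronskian,
      derivative_mul, derivative_X_pow]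
    simp only [F, Nat.add_sub_cancel]
    ring
  have hXF : X ∣ F := by
    rw [← mul_dvd_mul_iff_left (pow_ne_zero j X_ne_zero), ← pow_succ, ← hWF]
    exact (pow_dvd_pow X hjm).trans hW
  rw [X_dvd_iff] at hXF
  exact hchar (j + 1) j.succ_pos hjm (by simpa [F, hR0, hQ0] using hXF)

end CommRing

section Field

variable [Field K] {s : Finset ι} {γ : ι → K}

theorem exists_eq_neg_of_prod_one_sub_eq_prod_one_add
    (h : ∏ l ∈ s, (1 - C (γ l) * X) = ∏ l ∈ s, (1 + C (γ l) * X)) {l : ι} (hl : l ∈ s) :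
    ∃ l' ∈ s, γ l' = -γ l := by
  by_cases hγ : γ l = 0
  · exact ⟨l, hl, by simp [hγ]⟩
  have hroot : (∏ k ∈ s, (1 + C (γ k) * X)).eval (γ l)⁻¹ = 0 := by
    rw [← h, eval_prod]
    exact Finset.prod_eq_zero hl (by simp [mul_inv_cancel₀ hγ])
  obtain ⟨l', hl', hl'root⟩ := Finset.prod_eq_zero_iff.mp ((eval_prod _ _ _).symm.trans hroot)
  refine ⟨l', hl', ?_⟩
  simp only [eval_add, eval_one, eval_mul, eval_C, eval_X] at hl'root
  field_simp at hl'root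
  linear_combination hl'root

theorem exists_eq_neg_of_sum_odd_pow_eq_zero [DecidableEq ι] {t : ℕ} (hst : s.card ≤ 2 * t)
    (hchar : ∀ k, 0 < k → k ≤ s.card → (k : K) ≠ 0)
    (hγ : ∀ i < t, ∑ l ∈ s, γ l ^ (2 * i + 1) = 0) {l : ι} (hl : l ∈ s) :
    ∃ l' ∈ s, γ l' = -γ l := by
  have hsub : ∏ l ∈ s, (1 - C (γ l) * X) = ∏ l ∈ s, (1 + C (-γ l) * X) :=
    Finset.prod_congr rfl fun l _ => by rw [C_neg, neg_mul, sub_eq_add_neg]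
  refine exists_eq_neg_of_prod_one_sub_eq_prod_one_add (eq_of_X_pow_dvd_wronskian ?_
    (natDegree_prod_one_add_C_mul_X_le s γ) ?_ ?_ hchar
    ((pow_dvd_pow X hst).trans (X_pow_dvd_wronskian_prod_one_sub_prod_one_add s γ t hγ))) hl
  · exact hsub ▸ natDegree_prod_one_add_C_mul_X_le s _
  all_goals simp [coeff_zero_eq_eval_zero, eval_prod]

end Field

end Polynomial

section LeeWeight

variable {p : ℕ} [NeZero p]

theorem leeWt_eq_zero_iff {x : ZMod p} : leeWt p x = 0 ↔ x = 0 := by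
  have := ZMod.val_lt x
  rw [leeWt, ← ZMod.val_eq_zero]
  omega

theorem exists_sq_eq_one_and_eq_mul_leeWt (x : ZMod p) :
    ∃ ε : ZMod p, ε ^ 2 = 1 ∧ x = ε * leeWt p x := by
  rcases min_choice x.val (p - x.val) with h | h <;> rw [leeWt, h]
  · exact ⟨1, one_pow 2, by simp⟩
  · refine ⟨-1, by ring, ?_⟩
    rw [Nat.cast_sub (ZMod.val_lt x).le, ZMod.natCast_self, ZMod.natCast_zmod_val]
    ring

end LeeWeight

section NegacyclicCode

variable {p n : ℕ}

theorem aeval_vecPoly {A : Type*} [CommRing A] [Algebra (ZMod p) A] (v : Fin n → ZMod p)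
    (β : A) : aeval β (vecPoly p n v) = ∑ i, algebraMap (ZMod p) A (v i) * β ^ (i : ℕ) := by
  simp [vecPoly, map_sum]

theorem aeval_vecPoly_eq_zero_of_mem_negacyclicCode {A : Type*} [CommRing A] [Algebra (ZMod p) A]
    {g : (ZMod p)[X]} {v : Fin n → ZMod p} (hv : v ∈ negacyclicCode p n g) {β : A}
    (hβ : aeval β g = 0) : aeval β (vecPoly p n v) = 0 := by
  obtain ⟨c, hc⟩ := hv
  rw [hc, map_mul, hβ, zero_mul]

def leeIndex (p n : ℕ) (v : Fin n → ZMod p) : Finset ((_ : Fin n) × ℕ) :=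
  Finset.univ.sigma fun i => Finset.range (leeWt p (v i))

theorem card_leeIndex (v : Fin n → ZMod p) : (leeIndex p n v).card = leeWtV p n v := by
  simp [leeIndex, leeWtV]

theorem sum_leeIndex_odd_pow_eq_aeval_vecPoly {A : Type*} [CommRing A] [Algebra (ZMod p) A]
    {v : Fin n → ZMod p} {ε : Fin n → ZMod p}
    (hε : ∀ i, ε i ^ 2 = 1 ∧ v i = ε i * leeWt p (v i)) (β : A) (k : ℕ) :
    ∑ l ∈ leeIndex p n v, (algebraMap (ZMod p) A (ε l.1) * β ^ (l.1 : ℕ)) ^ (2 * k + 1) =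
      aeval (β ^ (2 * k + 1)) (vecPoly p n v) := by
  rw [aeval_vecPoly, leeIndex, Finset.sum_sigma]
  refine Finset.sum_congr rfl fun i _ => ?_
  dsimp only
  have hodd : algebraMap (ZMod p) A (ε i) ^ (2 * k + 1) = algebraMap (ZMod p) A (ε i) := by
    rw [← map_pow, pow_succ, pow_mul, (hε i).1, one_pow, one_mul]
  conv_rhs => rw [(hε i).2]
  rw [Finset.sum_const, Finset.card_range, nsmul_eq_mul, mul_pow, hodd, map_mul, map_natCast,
    ← pow_mul, ← pow_mul, mul_comm (i : ℕ)]
  ring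

end NegacyclicCode

theorem IsPrimitiveRoot.sign_mul_pow_ne_neg {K : Type*} [Field K] {n : ℕ} {α : K}
    (hα : IsPrimitiveRoot α (2 * n)) (h2 : (2 : K) ≠ 0) {ε : Fin n → K} (hε : ∀ i, ε i ^ 2 = 1)
    (i j : Fin n) : ε j * α ^ (j : ℕ) ≠ -(ε i * α ^ (i : ℕ)) := by
  intro h
  have hsq : α ^ (2 * (j : ℕ)) = α ^ (2 * (i : ℕ)) := by
    calc α ^ (2 * (j : ℕ)) = ε j ^ 2 * (α ^ (j : ℕ)) ^ 2 := by rw [hε, one_mul, ← pow_mul']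
      _ = ε i ^ 2 * (α ^ (i : ℕ)) ^ 2 := by
        linear_combination (ε j * α ^ (j : ℕ) - ε i * α ^ (i : ℕ)) * h
      _ = α ^ (2 * (i : ℕ)) := by rw [hε, one_mul, ← pow_mul']
  have hj2 : 2 * (j : ℕ) < 2 * n := by omega
  have hi2 : 2 * (i : ℕ) < 2 * n := by omega
  have hji : j = i := Fin.ext <| by have := hα.pow_inj hj2 hi2 hsq; omega
  subst hji
  have hε0 : ε j ≠ 0 := fun h0 => by simpa [h0] using hε j
  have hα0 : α ≠ 0 := hα.ne_zero (by omega)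
  exact mul_ne_zero (mul_ne_zero h2 hε0) (pow_ne_zero _ hα0) (by linear_combination h)

theorem stmt18_general (p n t : ℕ) [Fact (Nat.Prime p)] (hodd : Odd p)
    (α : AlgebraicClosure (ZMod p)) (hα : IsPrimitiveRoot α (2 * n))
    (g : (ZMod p)[X])
    (hroots : ∀ j, 1 ≤ j → j ≤ t → Polynomial.aeval (α ^ (2 * j - 1)) g = 0) :
    ∀ v ∈ negacyclicCode p n g, v ≠ 0 → min p (2 * t + 1) ≤ leeWtV p n v := by
  intro v hv hv0
  by_contra! hlt
  rw [lt_min_iff, ← card_leeIndex] at hlt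
  have hchar : ∀ k, 0 < k → k < p → (k : AlgebraicClosure (ZMod p)) ≠ 0 := fun k hk hkp => by
    rw [ne_eq, CharP.cast_eq_zero_iff _ p]
    exact Nat.not_dvd_of_pos_of_lt hk hkp
  have h2p : 2 < p := by
    have := (Fact.out : p.Prime).two_le
    rcases hodd with ⟨c, rfl⟩
    omega
  choose ε hε using fun i => exists_sq_eq_one_and_eq_mul_leeWt (v i)
  set γ : (_ : Fin n) × ℕ → AlgebraicClosure (ZMod p) :=
    fun l => algebraMap (ZMod p) _ (ε l.1) * α ^ (l.1 : ℕ)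
  have hγ : ∀ k < t, ∑ l ∈ leeIndex p n v, γ l ^ (2 * k + 1) = 0 := fun k hk => by
    rw [sum_leeIndex_odd_pow_eq_aeval_vecPoly hε]
    exact aeval_vecPoly_eq_zero_of_mem_negacyclicCode hv (hroots (k + 1) (by omega) (by omega))
  obtain ⟨i₀, hi₀⟩ := Function.ne_iff.mp hv0
  have hi₀mem : ⟨i₀, 0⟩ ∈ leeIndex p n v := by
    simpa [leeIndex, Nat.pos_iff_ne_zero, leeWt_eq_zero_iff] using hi₀
  obtain ⟨l, -, hl⟩ := Polynomial.exists_eq_neg_of_sum_odd_pow_eq_zero (by omega)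
    (fun k hk hks => hchar k hk (by omega)) hγ hi₀mem
  exact hα.sign_mul_pow_ne_neg (hchar 2 two_pos h2p) (ε := fun i => algebraMap (ZMod p) _ (ε i))
    (fun i => by rw [← map_pow, (hε i).1, map_one]) i₀ l.1 hl

/-- Berlekamp's bound: a negacyclic code whose generator vanishes at
`α, α³, …, α^(2t-1)` has minimum Lee weight at least `min p (2t+1)`. -/
theorem stmt18 (p n t : ℕ) [Fact (Nat.Prime p)] (hodd : Odd p) (hn : 0 < n)
    (hdvd : ¬ p ∣ 2 * n) (ht : 1 ≤ t)
    (α : AlgebraicClosure (ZMod p)) (hα : IsPrimitiveRoot α (2 * n))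
    (g : (ZMod p)[X]) (hg : g ∣ (X : (ZMod p)[X]) ^ n + 1)
    (hroots : ∀ j, 1 ≤ j → j ≤ t → Polynomial.aeval (α ^ (2 * j - 1)) g = 0) :
    ∀ v ∈ negacyclicCode p n g, v ≠ 0 → min p (2 * t + 1) ≤ leeWtV p n v :=
  stmt18_general p n t hodd α hα g hroots
end
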